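/- arXiv:0912.5034 — 8 statements merged into one kernel-verified Lean document; each statement's English description precedes it below -/
import Mathlib

section
/- The polynomials A_n and B_n produced by the recursion satisfy the identity B_n(z)·B_n^{♯n}(z) − A_n(z)·A_n^{♯n}(z) = ( Π_{j=0}^{n} (1 − |γ_j|²) ) · z^n as an identity of polynomials in ℂ[z]. -/
open Polynomial

/-- The pair `(A_j, B_j)` of polynomials from the recursion (1.8a):
`A_0 = γ_n`, `B_0 = 1`, `A_{j+1}(z) = z·A_j(z) + γ_{n-j-1}·B_j(z)`,
`B_{j+1}(z) = z·conj(γ_{n-j-1})·A_j(z) + B_j(z)`. -/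
noncomputable def schurAB (γ : ℕ → ℂ) (n : ℕ) : ℕ → Polynomial ℂ × Polynomial ℂ
  | 0 => (C (γ n), 1)
  | j + 1 =>
      (X * (schurAB γ n j).1 + C (γ (n - j - 1)) * (schurAB γ n j).2,
       X * C (starRingEnd ℂ (γ (n - j - 1))) * (schurAB γ n j).1 + (schurAB γ n j).2)

/-- The reflection `P^{♯k}`: the coefficient of `z^j` is `conj` of the coefficient of
`z^{k-j}` of `P`, i.e. `P^{♯k}(z) = z^k · conj(P(1/conj z))` for `P` of degree ≤ k. -/
noncomputable def sharp (k : ℕ) (P : Polynomial ℂ) : Polynomial ℂ :=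
  ∑ j ∈ Finset.range (k + 1), C (starRingEnd ℂ (P.coeff (k - j))) * X ^ j

open ComplexConjugate

/- Each step of the recursion multiplies `B ♯B - A ♯A` by `(1 - |γ|²) z`: the reflection is
conjugate-linear, `(z P)^{♯(k+1)} = P^{♯k}`, and `P^{♯(k+1)} = z P^{♯k}` when `deg P ≤ k`, so the
cross terms cancel. Starting from `1 - |γ_n|²` at `j = 0`, the product collects `1 - |γ_i|²` for
`i = n, n-1, …, 0`. -/

lemma sharp_add (k : ℕ) (P Q : ℂ[X]) : sharp k (P + Q) = sharp k P + sharp k Q := by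
  simp [sharp, add_mul, Finset.sum_add_distrib]

lemma sharp_C_mul (k : ℕ) (c : ℂ) (P : ℂ[X]) : sharp k (C c * P) = C (conj c) * sharp k P := by
  simp [sharp, Finset.mul_sum, mul_assoc]

lemma sharp_succ_X_mul (k : ℕ) (P : ℂ[X]) : sharp (k + 1) (X * P) = sharp k P := by
  rw [sharp, Finset.sum_range_succ, Nat.sub_self, coeff_X_mul_zero, map_zero, C_0, zero_mul,
    add_zero]
  refine Finset.sum_congr rfl fun j hj => ?_
  rw [Nat.succ_sub (Finset.mem_range_succ_iff.mp hj), coeff_X_mul]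

lemma sharp_succ_of_coeff_eq_zero {k : ℕ} {P : ℂ[X]} (h : P.coeff (k + 1) = 0) :
    sharp (k + 1) P = X * sharp k P := by
  rw [sharp, Finset.sum_range_succ', Nat.sub_zero, h, map_zero, C_0, zero_mul, add_zero, sharp,
    Finset.mul_sum]
  refine Finset.sum_congr rfl fun j _ => ?_
  rw [Nat.add_sub_add_right]
  ring

lemma sharp_det_step {k : ℕ} (g : ℂ) (A : ℂ[X]) {B : ℂ[X]} (hB : B.natDegree ≤ k) :
    (X * C (conj g) * A + B) * sharp (k + 1) (X * C (conj g) * A + B) -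
        (X * A + C g * B) * sharp (k + 1) (X * A + C g * B) =
      C (1 - (‖g‖ : ℂ) ^ 2) * X * (B * sharp k B - A * sharp k A) := by
  have hB' : sharp (k + 1) B = X * sharp k B :=
    sharp_succ_of_coeff_eq_zero (coeff_eq_zero_of_natDegree_lt (Nat.lt_succ_of_le hB))
  rw [sharp_add, sharp_add, mul_assoc, sharp_succ_X_mul, sharp_succ_X_mul, sharp_C_mul,
    sharp_C_mul, hB', Complex.conj_conj, ← Complex.conj_mul', C_sub, C_1, C_mul]
  ring

lemma natDegree_schurAB_le (γ : ℕ → ℂ) (n j : ℕ) :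
    (schurAB γ n j).1.natDegree ≤ j ∧ (schurAB γ n j).2.natDegree ≤ j := by
  induction j with
  | zero => simp [schurAB]
  | succ j ih =>
    obtain ⟨hA, hB⟩ := ih
    have natDegree_X_mul_le : ∀ {P : ℂ[X]}, P.natDegree ≤ j → (X * P).natDegree ≤ j + 1 :=
      fun hP => natDegree_mul_le.trans (by have := natDegree_X_le (R := ℂ); omega)
    constructor
    · refine natDegree_add_le_of_degree_le ?_ ?_
      · exact natDegree_X_mul_le hA
      · exact (natDegree_C_mul_le _ _).trans (hB.trans j.le_succ)
    · refine natDegree_add_le_of_degree_le ?_ (hB.trans j.le_succ)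
      rw [mul_comm X, mul_assoc]
      exact (natDegree_C_mul_le _ _).trans (natDegree_X_mul_le hA)

lemma schurAB_det (γ : ℕ → ℂ) (n j : ℕ) :
    (schurAB γ n j).2 * sharp j (schurAB γ n j).2 -
        (schurAB γ n j).1 * sharp j (schurAB γ n j).1 =
      C ((1 - (‖γ n‖ : ℂ) ^ 2) * ∏ i ∈ Finset.range j, (1 - (‖γ (n - i - 1)‖ : ℂ) ^ 2)) *
        X ^ j := by
  induction j with
  | zero =>
    simp only [schurAB, sharp, zero_add, Finset.range_one, Finset.sum_singleton, Nat.sub_self,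
      coeff_one_zero, coeff_C_zero, map_one, Finset.range_zero, Finset.prod_empty,
      ← Complex.conj_mul', C_sub, C_mul]
    ring
  | succ j ih =>
    rw [schurAB, sharp_det_step _ _ (natDegree_schurAB_le γ n j).2, ih, Finset.prod_range_succ,
      C_mul, C_mul, C_mul, pow_succ]
    ring

theorem stmt_4_general (n : ℕ) (γ : ℕ → ℂ) :
    (schurAB γ n n).2 * sharp n (schurAB γ n n).2 -
      (schurAB γ n n).1 * sharp n (schurAB γ n n).1 =
    C (∏ j ∈ Finset.range (n + 1), (1 - (‖γ j‖ : ℂ) ^ 2)) * X ^ n := by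
  rw [schurAB_det, Finset.prod_range_succ, mul_comm (∏ j ∈ _, _),
    ← Finset.prod_range_reflect (fun j => 1 - (‖γ j‖ : ℂ) ^ 2) n]
  simp only [Nat.sub_right_comm n 1]

/-- `B_n(z)·B_n^{♯n}(z) - A_n(z)·A_n^{♯n}(z) = (Π_{j=0}^{n} (1-|γ_j|²))·z^n`
as an identity of polynomials in `ℂ[z]`. -/
theorem stmt_4 (n : ℕ) (hn : 1 ≤ n) (γ : ℕ → ℂ)
    (hγ : ∀ j ≤ n, ‖γ j‖ < 1) :
    (schurAB γ n n).2 * sharp n (schurAB γ n n).2 -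
      (schurAB γ n n).1 * sharp n (schurAB γ n n).1 =
    C (∏ j ∈ Finset.range (n + 1), (1 - (‖γ j‖ : ℂ) ^ 2)) * X ^ n :=
  stmt_4_general n γ
end

section
/- One has max(deg F, deg G) − 1 ≤ max(deg N_1, deg D_1) ≤ max(deg F, deg G), i.e. the McMillan degree of f = F/G exceeds the McMillan degree of f_1 = N_1/D_1 by at most one and is at least that of f_1. -/
open Polynomial

/-! The substitution `(N₁, D₁) ↦ (X N₁ + c₀ D₁, c̄₀ X N₁ + D₁)` raises degrees by at most one,
and it is inverted up to the nonzero scalar `1 - c₀ c̄₀ = 1 - ‖c₀‖²`: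
`(1 - c₀ c̄₀) X N₁ = F - c₀ G` and `(1 - c₀ c̄₀) D₁ = G - c̄₀ F`, so degrees cannot drop either. -/

namespace Polynomial

section Semiring

variable {R : Type*} [Semiring R]

theorem natDegree_X_mul_add_le (P Q : R[X]) :
    (X * P + Q).natDegree ≤ max P.natDegree Q.natDegree + 1 := by
  refine (natDegree_add_le _ _).trans (max_le ?_ ?_)
  · calc (X * P).natDegree ≤ X.natDegree + P.natDegree := natDegree_mul_le
      _ ≤ 1 + P.natDegree := by gcongr; exact natDegree_X_le
      _ ≤ max P.natDegree Q.natDegree + 1 := by omega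
  · omega

theorem natDegree_mobius_le (a b : R) (N D : R[X]) :
    max (X * N + C a * D).natDegree (X * C b * N + D).natDegree ≤
      max N.natDegree D.natDegree + 1 := by
  have hF := natDegree_X_mul_add_le N (C a * D)
  have hG := natDegree_X_mul_add_le (C b * N) D
  rw [← mul_assoc] at hG
  have := natDegree_C_mul_le a D
  have := natDegree_C_mul_le b N
  omega

end Semiring

theorem natDegree_sub_C_mul_le {R : Type*} [Ring R] (P Q : R[X]) (a : R) :
    (P - C a * Q).natDegree ≤ max P.natDegree Q.natDegree :=
  (natDegree_sub_le _ _).trans (max_le_max le_rfl (natDegree_C_mul_le _ _))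

theorem le_natDegree_mobius {K : Type*} [Field K] {a b : K} (hab : a * b ≠ 1) (N D : K[X]) :
    max N.natDegree D.natDegree ≤
      max (X * N + C a * D).natDegree (X * C b * N + D).natDegree := by
  set F := X * N + C a * D
  set G := X * C b * N + D
  have hk : 1 - a * b ≠ 0 := sub_ne_zero.mpr hab.symm
  have hN : C (1 - a * b) * (X * N) = F - C a * G := by
    simp only [F, G, map_sub, map_mul, map_one]; ring
  have hD : C (1 - a * b) * D = G - C b * F := by
    simp only [F, G, map_sub, map_mul, map_one]; ring
  have hXN : N.natDegree ≤ (X * N).natDegree := by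
    rcases eq_or_ne N 0 with rfl | h
    · simp
    · rw [natDegree_X_mul h]; omega
  have hN' := natDegree_sub_C_mul_le F G a
  have hD' := natDegree_sub_C_mul_le G F b
  rw [← hN, natDegree_C_mul hk] at hN'
  rw [← hD, natDegree_C_mul hk] at hD'
  omega

end Polynomial

theorem Complex.mul_conj_ne_one_of_norm_lt_one {c : ℂ} (hc : ‖c‖ < 1) :
    c * starRingEnd ℂ c ≠ 1 := by
  rw [Complex.mul_conj, Complex.normSq_eq_norm_sq]
  norm_cast
  nlinarith [norm_nonneg c]

theorem stmt_8_general (c₀ : ℂ) (hc₀ : ‖c₀‖ < 1)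
    (N₁ D₁ : Polynomial ℂ)
    (F G : Polynomial ℂ)
    (hF : F = X * N₁ + C c₀ * D₁)
    (hG : G = X * C (starRingEnd ℂ c₀) * N₁ + D₁) :
    max F.natDegree G.natDegree - 1 ≤ max N₁.natDegree D₁.natDegree ∧
    max N₁.natDegree D₁.natDegree ≤ max F.natDegree G.natDegree := by
  subst hF hG
  have hupper := natDegree_mobius_le c₀ (starRingEnd ℂ c₀) N₁ D₁
  exact ⟨by omega, le_natDegree_mobius (Complex.mul_conj_ne_one_of_norm_lt_one hc₀) N₁ D₁⟩

/-- with `F = z·N₁ + c₀·D₁` and `G = z·conj(c₀)·N₁ + D₁` built from a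
coprime pair `(N₁, D₁)` with `D₁(0) ≠ 0` and `|c₀| < 1`, one has
`max(deg F, deg G) - 1 ≤ max(deg N₁, deg D₁) ≤ max(deg F, deg G)`:
the McMillan degree of `f = F/G` exceeds that of `f₁ = N₁/D₁` by at most one and is
at least that of `f₁`. -/
theorem stmt_8 (c₀ : ℂ) (hc₀ : ‖c₀‖ < 1)
    (N₁ D₁ : Polynomial ℂ) (hcop : IsCoprime N₁ D₁) (hD₁ : D₁.eval 0 ≠ 0)
    (F G : Polynomial ℂ)
    (hF : F = X * N₁ + C c₀ * D₁)
    (hG : G = X * C (starRingEnd ℂ c₀) * N₁ + D₁) :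
    max F.natDegree G.natDegree - 1 ≤ max N₁.natDegree D₁.natDegree ∧
    max N₁.natDegree D₁.natDegree ≤ max F.natDegree G.natDegree :=
  stmt_8_general c₀ hc₀ N₁ D₁ F G hF hG
end

section
/- The equality max(deg F, deg G) = max(deg N_1, deg D_1) holds if and only if deg N_1 < deg D_1 in the sense of strict degree comparison with deg 0 = −∞ (i.e. if and only if f_1 = N_1/D_1 vanishes at infinity). -/
open Polynomial

/-!
Since `G - conj(c₀)·F = (1 - |c₀|²) D₁` with `1 - |c₀|² ≠ 0`, the degree of `D₁` is always
at most `max(deg F, deg G)`. If `deg N₁ < deg D₁`, then also `deg F, deg G ≤ deg D₁`, so the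
maximum is exactly `deg D₁`. Otherwise `N₁ ≠ 0` (as `D₁ ≠ 0`), and the term `z N₁` dominates
`F`, so `deg F = deg N₁ + 1` exceeds `max(deg N₁, deg D₁)`.
-/

namespace Polynomial

theorem natDegree_X_mul_le_of_degree_lt {R : Type*} [Semiring R] {N D : R[X]}
    (h : N.degree < D.degree) : (X * N).natDegree ≤ D.natDegree := by
  refine natDegree_le_natDegree ((degree_mul_le _ _).trans ?_)
  rw [add_comm]
  exact (add_le_add_right degree_X_le _).trans (Nat.WithBot.add_one_le_of_lt h)

section Field

variable {K : Type*} [Field K]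

theorem natDegree_le_max_of_sub_C_mul {a b : K} (hab : 1 - b * a ≠ 0) (N D : K[X]) :
    D.natDegree ≤
      max (X * N + C a * D).natDegree (X * C b * N + D).natDegree := by
  have hcomb : X * C b * N + D - C b * (X * N + C a * D) = C (1 - b * a) * D := by
    simp only [map_sub, map_one, map_mul]
    ring
  have hsub := natDegree_sub_le (X * C b * N + D) (C b * (X * N + C a * D))
  rw [hcomb, natDegree_C_mul hab] at hsub
  have hCF := natDegree_C_mul_le b (X * N + C a * D)
  omega

theorem max_natDegree_eq_of_degree_lt {a b : K} (hab : 1 - b * a ≠ 0) {N D : K[X]}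
    (h : N.degree < D.degree) :
    max (X * N + C a * D).natDegree (X * C b * N + D).natDegree = D.natDegree := by
  have hXN := natDegree_X_mul_le_of_degree_lt h
  refine le_antisymm (max_le ?_ ?_) (natDegree_le_max_of_sub_C_mul hab N D)
  · exact natDegree_add_le_of_degree_le hXN (natDegree_C_mul_le _ _)
  · rw [mul_assoc, mul_left_comm]
    exact natDegree_add_le_of_degree_le ((natDegree_C_mul_le _ _).trans hXN) le_rfl

end Field

theorem natDegree_X_mul_add_C_mul {R : Type*} [Semiring R] [Nontrivial R] (a : R)
    {N D : R[X]} (hN : N ≠ 0) (h : D.natDegree ≤ N.natDegree) :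
    (X * N + C a * D).natDegree = N.natDegree + 1 := by
  rw [natDegree_add_eq_left_of_natDegree_lt] <;> rw [natDegree_X_mul hN]
  exact Nat.lt_succ_of_le ((natDegree_C_mul_le _ _).trans h)

end Polynomial

theorem Complex.one_sub_conj_mul_ne_zero {c : ℂ} (hc : ‖c‖ < 1) :
    1 - starRingEnd ℂ c * c ≠ 0 := by
  rw [Complex.conj_mul', sub_ne_zero]
  norm_cast
  exact (pow_lt_one₀ (norm_nonneg c) hc two_ne_zero).ne'

theorem stmt_9_general (c₀ : ℂ) (hc₀ : ‖c₀‖ < 1)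
    (N₁ D₁ : Polynomial ℂ) (hD₁ : D₁.eval 0 ≠ 0)
    (F G : Polynomial ℂ)
    (hF : F = X * N₁ + C c₀ * D₁)
    (hG : G = X * C (starRingEnd ℂ c₀) * N₁ + D₁) :
    max F.natDegree G.natDegree = max N₁.natDegree D₁.natDegree ↔
      N₁.degree < D₁.degree := by
  subst hF hG
  have hD0 : D₁ ≠ 0 := fun h => hD₁ (by simp [h])
  by_cases h : N₁.degree < D₁.degree
  · rw [max_natDegree_eq_of_degree_lt (Complex.one_sub_conj_mul_ne_zero hc₀) h,
      max_eq_right (natDegree_le_natDegree h.le)]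
    exact iff_of_true rfl h
  · have hN0 : N₁ ≠ 0 := by
      rintro rfl
      exact h (bot_lt_iff_ne_bot.mpr (degree_ne_bot.mpr hD0))
    have hDN : D₁.natDegree ≤ N₁.natDegree := natDegree_le_natDegree (not_lt.mp h)
    refine iff_of_false ?_ h
    have hF := natDegree_X_mul_add_C_mul c₀ hN0 hDN
    omega

/-- with `F = z·N₁ + c₀·D₁` and `G = z·conj(c₀)·N₁ + D₁` built from a
coprime pair `(N₁, D₁)` with `D₁(0) ≠ 0` and `|c₀| < 1`, the equality
`max(deg F, deg G) = max(deg N₁, deg D₁)` (natural-number degrees, `deg 0 = 0`) holds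
if and only if `deg N₁ < deg D₁` in the strict sense (`deg 0 = -∞`), i.e. iff
`f₁ = N₁/D₁` vanishes at infinity. -/
theorem stmt_9 (c₀ : ℂ) (hc₀ : ‖c₀‖ < 1)
    (N₁ D₁ : Polynomial ℂ) (hcop : IsCoprime N₁ D₁) (hD₁ : D₁.eval 0 ≠ 0)
    (F G : Polynomial ℂ)
    (hF : F = X * N₁ + C c₀ * D₁)
    (hG : G = X * C (starRingEnd ℂ c₀) * N₁ + D₁) :
    max F.natDegree G.natDegree = max N₁.natDegree D₁.natDegree ↔
      N₁.degree < D₁.degree :=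
  stmt_9_general c₀ hc₀ N₁ D₁ hD₁ F G hF hG
end

section
/- The following are equivalent: (i) max(deg F, deg G) = max(deg N_1, deg D_1) + 1; (ii) deg D_1 ≤ deg N_1 in the sense of strict-degree comparison with deg 0 = −∞ (i.e. f_1 = N_1/D_1 does not vanish at infinity); (iii) f = F/G takes the value 1/conj(c_0) at infinity, meaning: either c_0 = 0 and deg G < deg F (with deg 0 = −∞), or deg F = deg G and conj(c_0)·(leading coefficient of F) = (leading coefficient of G). -/
open Polynomial

/-! Write `F = X N + c D` and `G = a X N + D` (here `a = conj c₀`). If `deg D ≤ deg N`, the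
term `X N` dominates: `F` and `G` have degree `deg N + 1` (unless `a = 0`, when `G = D`) and
leading coefficients `lc N` and `a lc N`. If `deg N < deg D`, both have degree at most `deg D`,
and `deg F = deg G`, `a lc F = lc G` would give `deg (G - a F) < deg G ≤ deg D`, whereas
`G - a F = (1 - a c) D` with `1 - |c₀|² ≠ 0`. -/
namespace Polynomial

section XMulAdd

variable {R : Type*} [Semiring R] {p q r : R[X]}

theorem degree_C_mul_le (a : R) (p : R[X]) : (C a * p).degree ≤ p.degree :=
  C_mul' a p ▸ degree_smul_le a p

theorem degree_lt_degree_X_mul_of_degree_le (hp : p ≠ 0) (hr : r.degree ≤ p.degree) :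
    r.degree < (X * p).degree :=
  hr.trans_lt (X_mul (p := p) ▸ degree_lt_degree_mul_X hp)

theorem leadingCoeff_X_mul_add_of_degree_le (hp : p ≠ 0) (hr : r.degree ≤ p.degree) :
    (X * p + r).leadingCoeff = p.leadingCoeff := by
  rw [leadingCoeff_add_of_degree_lt' (degree_lt_degree_X_mul_of_degree_le hp hr), X_mul,
    leadingCoeff_mul_X]

variable [Nontrivial R]

theorem degree_X_mul_add_le_of_degree_lt (hp : p.degree < q.degree) (hr : r.degree ≤ q.degree) :
    (X * p + r).degree ≤ q.degree := by
  refine (degree_add_le _ _).trans (max_le ?_ hr)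
  rw [X_mul, degree_mul_X]
  exact Nat.WithBot.add_one_le_of_lt hp

theorem degree_X_mul_add_of_degree_le (hp : p ≠ 0) (hr : r.degree ≤ p.degree) :
    (X * p + r).degree = p.degree + 1 := by
  rw [degree_add_eq_left_of_degree_lt (degree_lt_degree_X_mul_of_degree_le hp hr), X_mul,
    degree_mul_X]

theorem natDegree_X_mul_add_of_degree_le (hp : p ≠ 0) (hr : r.degree ≤ p.degree) :
    (X * p + r).natDegree = p.natDegree + 1 := by
  rw [natDegree_add_eq_left_of_degree_lt (degree_lt_degree_X_mul_of_degree_le hp hr),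
    natDegree_X_mul hp]

end XMulAdd

theorem degree_sub_C_mul_lt {K : Type*} [Field K] {p q : K[X]} {a : K} (hp : p ≠ 0)
    (hdeg : q.degree = p.degree) (hlc : a * q.leadingCoeff = p.leadingCoeff) :
    (p - C a * q).degree < p.degree := by
  have ha : a ≠ 0 := by
    rintro rfl
    exact hp (leadingCoeff_eq_zero.mp (by rw [← hlc, zero_mul]))
  refine degree_sub_lt_left ?_ hp ?_
  · rw [degree_C_mul ha, hdeg]
  · rw [leadingCoeff_mul, leadingCoeff_C, hlc]

section MobiusNumeratorDenominator

variable {K : Type*} [Field K] {a c : K} {N D F G : K[X]}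

theorem degree_numer_denom_le_of_degree_lt (hlt : N.degree < D.degree)
    (hF : F = X * N + C c * D) (hG : G = X * C a * N + D) :
    F.degree ≤ D.degree ∧ G.degree ≤ D.degree := by
  rw [mul_assoc] at hG
  exact ⟨hF ▸ degree_X_mul_add_le_of_degree_lt hlt (degree_C_mul_le c D),
    hG ▸ degree_X_mul_add_le_of_degree_lt ((degree_C_mul_le a N).trans_lt hlt) le_rfl⟩

theorem natDegree_max_eq_iff_degree_le (hD : D ≠ 0) (hF : F = X * N + C c * D)
    (hG : G = X * C a * N + D) :
    max F.natDegree G.natDegree = max N.natDegree D.natDegree + 1 ↔ D.degree ≤ N.degree := by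
  constructor
  · contrapose!
    intro hlt
    obtain ⟨hFD, hGD⟩ := degree_numer_denom_le_of_degree_lt hlt hF hG
    have := natDegree_le_natDegree hFD
    have := natDegree_le_natDegree hGD
    have := natDegree_le_natDegree hlt.le
    omega
  · intro hle
    have hN : N ≠ 0 := ne_zero_of_degree_ge_degree hle hD
    have hFN : F.natDegree = N.natDegree + 1 :=
      hF ▸ natDegree_X_mul_add_of_degree_le hN ((degree_C_mul_le c D).trans hle)
    have hDN : D.natDegree ≤ N.natDegree := natDegree_le_natDegree hle
    have hGN : G.natDegree ≤ N.natDegree + 1 := by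
      rw [mul_assoc] at hG
      rcases eq_or_ne a 0 with rfl | ha
      · simp only [hG, C_0, zero_mul, mul_zero, zero_add]
        omega
      · rw [hG, natDegree_X_mul_add_of_degree_le (by simpa [ha] using hN)
          (by rwa [degree_C_mul ha]), natDegree_C_mul ha]
    omega

theorem degree_le_of_ratio_at_infinity_eq_inv (hD : D ≠ 0) (hac : 1 - a * c ≠ 0)
    (hF : F = X * N + C c * D) (hG : G = X * C a * N + D)
    (h : (a = 0 ∧ G.degree < F.degree) ∨
      (F.degree = G.degree ∧ a * F.leadingCoeff = G.leadingCoeff)) :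
    D.degree ≤ N.degree := by
  have hGsub : G - C a * F = C (1 - a * c) * D := by
    rw [hF, hG, C_sub, C_1, C_mul]
    ring
  by_contra! hlt
  obtain ⟨hFD, hGD⟩ := degree_numer_denom_le_of_degree_lt hlt hF hG
  rcases h with ⟨rfl, hGF⟩ | ⟨hFG, hlc⟩
  · simp only [hG, C_0, zero_mul, mul_zero, zero_add] at hGF
    exact (hGF.trans_le hFD).false
  · have hG0 : G ≠ 0 := by
      rintro rfl
      rw [degree_zero, degree_eq_bot] at hFG
      rw [hFG, mul_zero, sub_zero] at hGsub
      exact mul_ne_zero (C_ne_zero.mpr hac) hD hGsub.symm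
    have hcancel := degree_sub_C_mul_lt hG0 hFG hlc
    rw [hGsub, degree_C_mul hac] at hcancel
    exact (hcancel.trans_le hGD).false

theorem ratio_at_infinity_eq_inv_of_degree_le (hD : D ≠ 0) (hF : F = X * N + C c * D)
    (hG : G = X * C a * N + D) (hle : D.degree ≤ N.degree) :
    (a = 0 ∧ G.degree < F.degree) ∨
      (F.degree = G.degree ∧ a * F.leadingCoeff = G.leadingCoeff) := by
  rw [mul_assoc] at hG
  have hN : N ≠ 0 := ne_zero_of_degree_ge_degree hle hD
  have hcD : (C c * D).degree ≤ N.degree := (degree_C_mul_le c D).trans hle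
  have hFN : F.degree = N.degree + 1 := hF ▸ degree_X_mul_add_of_degree_le hN hcD
  rcases eq_or_ne a 0 with rfl | ha
  · refine Or.inl ⟨rfl, ?_⟩
    simp only [hG, hFN, C_0, zero_mul, mul_zero, zero_add]
    refine hle.trans_lt ?_
    rw [degree_eq_natDegree hN]
    exact_mod_cast Nat.lt_succ_self _
  · have haN : C a * N ≠ 0 := by simpa [ha] using hN
    have hDa : D.degree ≤ (C a * N).degree := by rwa [degree_C_mul ha]
    refine Or.inr ⟨?_, ?_⟩
    · rw [hFN, hG, degree_X_mul_add_of_degree_le haN hDa, degree_C_mul ha]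
    · rw [hF, hG, leadingCoeff_X_mul_add_of_degree_le hN hcD,
        leadingCoeff_X_mul_add_of_degree_le haN hDa, leadingCoeff_mul, leadingCoeff_C]

end MobiusNumeratorDenominator

end Polynomial

theorem RCLike.one_sub_conj_mul_ne_zero {𝕜 : Type*} [RCLike 𝕜] {z : 𝕜} (hz : ‖z‖ < 1) :
    1 - starRingEnd 𝕜 z * z ≠ 0 := by
  rw [RCLike.conj_mul, sub_ne_zero]
  norm_cast
  nlinarith [norm_nonneg z]

theorem stmt_10_general (c₀ : ℂ) (hc₀ : ‖c₀‖ < 1)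
    (N₁ D₁ : Polynomial ℂ) (hD₁ : D₁.eval 0 ≠ 0)
    (F G : Polynomial ℂ)
    (hF : F = X * N₁ + C c₀ * D₁)
    (hG : G = X * C (starRingEnd ℂ c₀) * N₁ + D₁) :
    (max F.natDegree G.natDegree = max N₁.natDegree D₁.natDegree + 1 ↔
      D₁.degree ≤ N₁.degree) ∧
    (max F.natDegree G.natDegree = max N₁.natDegree D₁.natDegree + 1 ↔
      ((c₀ = 0 ∧ G.degree < F.degree) ∨
        (F.degree = G.degree ∧ starRingEnd ℂ c₀ * F.leadingCoeff = G.leadingCoeff))) := by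
  have hD : D₁ ≠ 0 := by
    rintro rfl
    exact hD₁ eval_zero
  have hdeg := natDegree_max_eq_iff_degree_le hD hF hG
  have hratio : _ ↔ D₁.degree ≤ N₁.degree :=
    ⟨degree_le_of_ratio_at_infinity_eq_inv hD (RCLike.one_sub_conj_mul_ne_zero hc₀) hF hG,
      ratio_at_infinity_eq_inv_of_degree_le hD hF hG⟩
  rw [map_eq_zero] at hratio
  exact ⟨hdeg, hdeg.trans hratio.symm⟩

/-- with `F = z·N₁ + c₀·D₁` and `G = z·conj(c₀)·N₁ + D₁` built from a
coprime pair `(N₁, D₁)` with `D₁(0) ≠ 0` and `|c₀| < 1`, the following are equivalent: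
(i) `max(deg F, deg G) = max(deg N₁, deg D₁) + 1` (natural-number degrees);
(ii) `deg D₁ ≤ deg N₁` (strict-degree comparison, `deg 0 = -∞`), i.e. `f₁` does not
vanish at infinity;
(iii) `f = F/G` takes the value `1/conj(c₀)` at infinity: either `c₀ = 0` and
`deg G < deg F`, or `deg F = deg G` and `conj(c₀)·lc(F) = lc(G)`. -/
theorem stmt_10 (c₀ : ℂ) (hc₀ : ‖c₀‖ < 1)
    (N₁ D₁ : Polynomial ℂ) (hcop : IsCoprime N₁ D₁) (hD₁ : D₁.eval 0 ≠ 0)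
    (F G : Polynomial ℂ)
    (hF : F = X * N₁ + C c₀ * D₁)
    (hG : G = X * C (starRingEnd ℂ c₀) * N₁ + D₁) :
    (max F.natDegree G.natDegree = max N₁.natDegree D₁.natDegree + 1 ↔
      D₁.degree ≤ N₁.degree) ∧
    (max F.natDegree G.natDegree = max N₁.natDegree D₁.natDegree + 1 ↔
      ((c₀ = 0 ∧ G.degree < F.degree) ∨
        (F.degree = G.degree ∧ starRingEnd ℂ c₀ * F.leadingCoeff = G.leadingCoeff))) :=
  stmt_10_general c₀ hc₀ N₁ D₁ hD₁ F G hF hG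
end

section
/- The polynomials F = z·N_1 + c_0·D_1 and G = z·conj(c_0)·N_1 + D_1 have no common zero in ℂ; equivalently, F and G are coprime in ℂ[z], so that f = F/G is a coprime representation and the McMillan degree of f equals max(deg F, deg G). -/
open Polynomial

/-!
Writing `P = X·N₁` and `Q = D₁`, the pair `(F, G)` is the image of `(P, Q)` under the constant
matrix `[[1, c₀], [conj c₀, 1]]`, whose determinant `1 - |c₀|²` is nonzero. Hence `F` and `G`
generate the same ideal as `P` and `Q`, which is the unit ideal since `D₁` is coprime both to
`N₁` and, as `D₁(0) ≠ 0`, to `X`. A Bézout identity for `F`, `G` rules out a common zero.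
-/

theorem IsCoprime.linear_combination_of_isUnit_det {R : Type*} [CommRing R] {P Q : R}
    (h : IsCoprime P Q) {a b c d : R} (hdet : IsUnit (a * d - b * c)) :
    IsCoprime (a * P + b * Q) (c * P + d * Q) := by
  obtain ⟨u, v, huv⟩ := h
  obtain ⟨e, he⟩ := hdet.exists_left_inv
  exact ⟨e * (u * d - v * c), e * (v * a - u * b),
    by linear_combination (u * P + v * Q) * he + huv⟩

theorem Polynomial.isCoprime_X_of_eval_zero_ne_zero {K : Type*} [Field K] {p : K[X]}
    (h : p.eval 0 ≠ 0) : IsCoprime X p := by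
  rwa [irreducible_X.coprime_iff_not_dvd, X_dvd_iff, coeff_zero_eq_eval_zero]

theorem Polynomial.eval_ne_zero_of_isCoprime {R : Type*} [CommRing R] [Nontrivial R]
    {p q : R[X]} (h : IsCoprime p q) (z : R) : ¬(p.eval z = 0 ∧ q.eval z = 0) := by
  simpa only [coe_aeval_eq_eval, not_and_or] using aeval_ne_zero_of_isCoprime h z

theorem Complex.one_sub_mul_conj_ne_zero {z : ℂ} (hz : ‖z‖ < 1) :
    1 - z * starRingEnd ℂ z ≠ 0 := by
  rw [mul_conj, ← ofReal_one, ← ofReal_sub, ofReal_ne_zero, sub_ne_zero, normSq_eq_norm_sq]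
  exact (pow_lt_one₀ (norm_nonneg z) hz two_ne_zero).ne'

/-- with `F = z·N₁ + c₀·D₁` and `G = z·conj(c₀)·N₁ + D₁` built from a
coprime pair `(N₁, D₁)` with `D₁(0) ≠ 0` and `|c₀| < 1`, the polynomials `F` and `G`
have no common zero in `ℂ`; equivalently they are coprime in `ℂ[z]`, so `f = F/G` is a
coprime representation and the McMillan degree of `f` equals `max(deg F, deg G)`. -/
theorem stmt_11 (c₀ : ℂ) (hc₀ : ‖c₀‖ < 1)
    (N₁ D₁ : Polynomial ℂ) (hcop : IsCoprime N₁ D₁) (hD₁ : D₁.eval 0 ≠ 0)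
    (F G : Polynomial ℂ)
    (hF : F = X * N₁ + C c₀ * D₁)
    (hG : G = X * C (starRingEnd ℂ c₀) * N₁ + D₁) :
    (∀ z : ℂ, ¬(F.eval z = 0 ∧ G.eval z = 0)) ∧ IsCoprime F G := by
  have hdet : IsUnit (1 * 1 - C c₀ * C (starRingEnd ℂ c₀)) := by
    rw [one_mul, ← C_mul, ← C_1, ← C_sub]
    exact isUnit_C.mpr (Complex.one_sub_mul_conj_ne_zero hc₀).isUnit
  have hPQ : IsCoprime (X * N₁) D₁ := (isCoprime_X_of_eval_zero_ne_zero hD₁).mul_left hcop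
  have hFG : IsCoprime F G := by
    rw [hF, hG, mul_right_comm, mul_comm _ (C _)]
    simpa only [one_mul] using hPQ.linear_combination_of_isUnit_det hdet
  exact ⟨eval_ne_zero_of_isCoprime hFG, hFG⟩
end

section
/- If for some index i with 0 ≤ i ≤ n one has d_i = d_{i+1} + 1, then d_j = d_{j+1} + 1 holds for every j with 0 ≤ j ≤ i; that is, once the McMillan degree drops by one at some step of the backward Schur algorithm, it drops by one at every earlier step. -/
/-!
Call a pair `(p, q)` dominant when `deg q < deg (X * p)`, i.e. `p ≠ 0` and `deg q ≤ deg p`.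
One step `(p, q) ↦ (X p + a q, X b p + q)` applied to a dominant pair raises `deg p` by exactly
one and keeps the second entry below it, so the new pair is again dominant and the degree
`max (deg p) (deg q)` grows by one. Applied to a non-dominant pair, both new entries have degree
at most `deg q`, so the degree does not grow. Hence a growth by one at step `i` forces dominance
at `i + 1`, which then propagates down to every earlier step.
-/

open Polynomial

namespace Polynomial

variable {R : Type*} [Semiring R] {p q : R[X]}

lemma natDegree_lt_natDegree_X_mul [Nontrivial R] (hp : p ≠ 0) :
    p.natDegree < (X * p).natDegree := by
  rw [natDegree_X_mul hp]
  exact Nat.lt_succ_self _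

lemma natDegree_X_mul_add_C_mul_le (a : R) :
    (X * p + C a * q).natDegree ≤ max (X * p).natDegree q.natDegree :=
  (natDegree_add_le _ _).trans (max_le_max le_rfl (natDegree_C_mul_le a q))

lemma natDegree_X_mul_C_mul_add_le (b : R) :
    (X * C b * p + q).natDegree ≤ max (X * p).natDegree q.natDegree := by
  rw [X_mul_C, mul_assoc]
  exact (natDegree_add_le _ _).trans (max_le_max (natDegree_C_mul_le b _) le_rfl)

lemma natDegree_X_mul_add_C_mul_of_lt (a : R) (h : q.natDegree < (X * p).natDegree) :
    (X * p + C a * q).natDegree = (X * p).natDegree :=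
  natDegree_add_eq_left_of_natDegree_lt ((natDegree_C_mul_le a q).trans_lt h)

lemma max_natDegree_X_mul_add_C_mul_eq_of_lt [Nontrivial R] (a b : R)
    (h : q.natDegree < (X * p).natDegree) :
    max (X * p + C a * q).natDegree (X * C b * p + q).natDegree =
      max p.natDegree q.natDegree + 1 := by
  have hp : p ≠ 0 := by
    rintro rfl
    simp at h
  have hD := natDegree_X_mul_C_mul_add_le b (p := p) (q := q)
  rw [natDegree_X_mul_add_C_mul_of_lt a h]
  rw [natDegree_X_mul hp] at h hD ⊢
  omega

lemma natDegree_X_mul_C_mul_add_lt_of_lt [Nontrivial R] (a b : R)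
    (h : q.natDegree < (X * p).natDegree) :
    (X * C b * p + q).natDegree < (X * (X * p + C a * q)).natDegree := by
  have hN := natDegree_X_mul_add_C_mul_of_lt a h
  have hN0 : X * p + C a * q ≠ 0 := by
    intro h0
    rw [h0, natDegree_zero] at hN
    omega
  have hlt := natDegree_lt_natDegree_X_mul hN0
  rw [hN] at hlt
  exact ((natDegree_X_mul_C_mul_add_le b).trans (max_le le_rfl h.le)).trans_lt hlt

lemma max_natDegree_X_mul_add_C_mul_le_of_le (a b : R) (h : (X * p).natDegree ≤ q.natDegree) :
    max (X * p + C a * q).natDegree (X * C b * p + q).natDegree ≤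
      max p.natDegree q.natDegree := by
  have hN := natDegree_X_mul_add_C_mul_le a (p := p) (q := q)
  have hD := natDegree_X_mul_C_mul_add_le b (p := p) (q := q)
  rw [max_eq_right h] at hN hD
  exact (max_le hN hD).trans (le_max_right _ _)

end Polynomial

theorem stmt_12_general (n : ℕ) (γ : ℕ → ℂ)
    (N D : ℕ → Polynomial ℂ)
    (hN : ∀ j ≤ n, N j = X * N (j + 1) + C (γ j) * D (j + 1))
    (hD : ∀ j ≤ n, D j = X * C (starRingEnd ℂ (γ j)) * N (j + 1) + D (j + 1))
    (d : ℕ → ℕ) (hd : ∀ j, d j = max (N j).natDegree (D j).natDegree) :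
    ∀ i ≤ n, d i = d (i + 1) + 1 → ∀ j ≤ i, d j = d (j + 1) + 1 := by
  set Dominant : ℕ → Prop := fun j ↦ (D j).natDegree < (X * N j).natDegree
  have step_of_dominant : ∀ j ≤ n, Dominant (j + 1) → d j = d (j + 1) + 1 ∧ Dominant j := by
    intro j hj h
    constructor
    · rw [hd, hd, hN j hj, hD j hj]
      exact max_natDegree_X_mul_add_C_mul_eq_of_lt _ _ h
    · change (D j).natDegree < (X * N j).natDegree
      rw [hN j hj, hD j hj]
      exact natDegree_X_mul_C_mul_add_lt_of_lt _ _ h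
  have step_of_not_dominant : ∀ j ≤ n, ¬ Dominant (j + 1) → d j ≤ d (j + 1) := by
    intro j hj h
    rw [hd, hd, hN j hj, hD j hj]
    exact max_natDegree_X_mul_add_C_mul_le_of_le _ _ (not_lt.mp h)
  intro i hi hdrop j hji
  have dominant_i : Dominant (i + 1) := by
    by_contra h
    have := step_of_not_dominant i hi h
    omega
  have dominant_j : Dominant (j + 1) :=
    Nat.decreasingInduction (motive := fun k _ ↦ Dominant (k + 1))
      (fun k hk h ↦ (step_of_dominant (k + 1) (by omega) h).2) dominant_i hji
  exact (step_of_dominant j (hji.trans hi) dominant_j).1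

/-- Lemma 2.3, first part: in the backward Schur algorithm
`N_j = z·N_{j+1} + γ_j·D_{j+1}`, `D_j = z·conj(γ_j)·N_{j+1} + D_{j+1}` started from a
coprime pair `(N_{n+1}, D_{n+1})` with `D_{n+1}(0) ≠ 0`, if the McMillan degree
`d_j = max(deg N_j, deg D_j)` satisfies `d_i = d_{i+1} + 1` for some `i ≤ n`, then
`d_j = d_{j+1} + 1` for every `j ≤ i`. -/
theorem stmt_12 (n : ℕ) (γ : ℕ → ℂ) (hγ : ∀ j ≤ n, ‖γ j‖ < 1)
    (N D : ℕ → Polynomial ℂ)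
    (hcop : IsCoprime (N (n + 1)) (D (n + 1))) (hD0 : (D (n + 1)).eval 0 ≠ 0)
    (hN : ∀ j ≤ n, N j = X * N (j + 1) + C (γ j) * D (j + 1))
    (hD : ∀ j ≤ n, D j = X * C (starRingEnd ℂ (γ j)) * N (j + 1) + D (j + 1))
    (d : ℕ → ℕ) (hd : ∀ j, d j = max (N j).natDegree (D j).natDegree) :
    ∀ i ≤ n, d i = d (i + 1) + 1 → ∀ j ≤ i, d j = d (j + 1) + 1 :=
  stmt_12_general n γ N D hN hD d hd
end

section
/- If d_0 ≤ n, then d_{n+1} ≤ n and deg N_{n+1} < deg D_{n+1} (strict degree comparison with deg 0 = −∞); that is, if the function f = f_0 obtained from the parameter E = f_{n+1} by n+1 steps of the backward Schur algorithm has McMillan degree at most n, then the parameter E has McMillan degree at most n and vanishes at infinity. -/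
/-!
For `‖γ‖ < 1` the Schur step `(N, D) ↦ (X N + γ D, X γ̄ N + D)` can be undone:
`(1 - |γ|²) X N` and `(1 - |γ|²) D` are combinations of the new pair with constant coefficients.
Hence the McMillan degree of the parameter is at most that of `f₀`.
If the parameter did not vanish at infinity, i.e. `deg D_{n+1} ≤ deg N_{n+1}`, every step would
keep the numerator dominant and raise its degree by one, forcing `deg N₀ ≥ n + 1 > d₀`.
-/

open Polynomial

theorem schur_max_natDegree_le {γ : ℂ} (hγ : ‖γ‖ < 1) (N D : ℂ[X]) :
    max N.natDegree D.natDegree ≤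
      max (X * N + C γ * D).natDegree (X * C (starRingEnd ℂ γ) * N + D).natDegree := by
  set N₀ := X * N + C γ * D
  set D₀ := X * C (starRingEnd ℂ γ) * N + D
  set c : ℂ := 1 - γ * starRingEnd ℂ γ with hc_def
  have hc : c ≠ 0 := by
    rw [hc_def, Complex.mul_conj, sub_ne_zero, ne_comm, ← Complex.ofReal_one, Ne,
      Complex.ofReal_inj, Complex.normSq_eq_norm_sq]
    nlinarith [norm_nonneg γ]
  have hXN : C c * (X * N) = N₀ - C γ * D₀ := by
    simp only [N₀, D₀, c, map_sub, map_mul, map_one]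
    ring
  have hD : C c * D = D₀ - C (starRingEnd ℂ γ) * N₀ := by
    simp only [N₀, D₀, c, map_sub, map_mul, map_one]
    ring
  have hXN_le : (X * N).natDegree ≤ max N₀.natDegree D₀.natDegree := by
    rw [← natDegree_C_mul hc, hXN]
    exact (natDegree_sub_le _ _).trans
      (max_le_max le_rfl (natDegree_C_mul_le _ _))
  have hD_le : D.natDegree ≤ max N₀.natDegree D₀.natDegree := by
    rw [← natDegree_C_mul hc, hD, max_comm]
    exact (natDegree_sub_le _ _).trans
      (max_le_max le_rfl (natDegree_C_mul_le _ _))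
  refine max_le ?_ hD_le
  rcases eq_or_ne N 0 with rfl | hN
  · exact Nat.zero_le _
  · rw [natDegree_mul X_ne_zero hN, natDegree_X] at hXN_le
    omega

theorem schur_degree_of_degree_le (γ : ℂ) {N D : ℂ[X]} (hDN : D.degree ≤ N.degree) :
    (X * N + C γ * D).degree = N.degree + 1 ∧
      (X * C (starRingEnd ℂ γ) * N + D).degree ≤ (X * N + C γ * D).degree := by
  rcases eq_or_ne N 0 with rfl | hN
  · rw [degree_zero, le_bot_iff, degree_eq_bot] at hDN
    simp [hDN]
  have hXN : (X * N).degree = N.degree + 1 := by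
    rw [degree_mul, degree_X, add_comm]
  have hN_lt : N.degree < N.degree + 1 := by
    rw [degree_eq_natDegree hN]
    exact_mod_cast Nat.lt_succ_self _
  have hγD : (C γ * D).degree < (X * N).degree :=
    hXN ▸ (C_mul' γ D ▸ degree_smul_le γ D).trans_lt (hDN.trans_lt hN_lt)
  have hN₀ : (X * N + C γ * D).degree = N.degree + 1 := by
    rw [degree_add_eq_left_of_degree_lt hγD, hXN]
  refine ⟨hN₀, hN₀ ▸ (degree_add_le _ _).trans (max_le ?_ (hDN.trans hN_lt.le))⟩
  rw [mul_comm X, mul_assoc, C_mul', ← hXN]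
  exact degree_smul_le _ _

section BackwardSchur

variable {n : ℕ} {γ : ℕ → ℂ} {N D : ℕ → ℂ[X]}
  (hN : ∀ j ≤ n, N j = X * N (j + 1) + C (γ j) * D (j + 1))
  (hD : ∀ j ≤ n, D j = X * C (starRingEnd ℂ (γ j)) * N (j + 1) + D (j + 1))
include hN hD

theorem backwardSchur_max_natDegree_le (hγ : ∀ j ≤ n, ‖γ j‖ < 1) {j : ℕ}
    (hj : j ≤ n + 1) :
    max (N (n + 1)).natDegree (D (n + 1)).natDegree ≤ max (N j).natDegree (D j).natDegree := by
  induction hj using Nat.decreasingInduction with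
  | self => exact le_rfl
  | of_succ k hk ih =>
    have hkn : k ≤ n := Nat.lt_succ_iff.mp hk
    rw [hN k hkn, hD k hkn]
    exact ih.trans (schur_max_natDegree_le (hγ k hkn) _ _)

theorem backwardSchur_degree_eq_of_degree_le (hDN : (D (n + 1)).degree ≤ (N (n + 1)).degree)
    {j : ℕ} (hj : j ≤ n + 1) :
    (D j).degree ≤ (N j).degree ∧ (N j).degree = (N (n + 1)).degree + ↑(n + 1 - j) := by
  induction hj using Nat.decreasingInduction with
  | self => simp [hDN]
  | of_succ k hk ih =>
    have hkn : k ≤ n := Nat.lt_succ_iff.mp hk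
    obtain ⟨hN_eq, hDN_k⟩ := schur_degree_of_degree_le (γ k) ih.1
    rw [hN k hkn, hD k hkn]
    refine ⟨hDN_k, ?_⟩
    rw [hN_eq, ih.2, add_assoc, ← Nat.cast_succ]
    congr 2
    omega

end BackwardSchur

theorem stmt_14_general (n : ℕ) (γ : ℕ → ℂ) (hγ : ∀ j ≤ n, ‖γ j‖ < 1)
    (N D : ℕ → Polynomial ℂ)
    (hD0 : (D (n + 1)).eval 0 ≠ 0)
    (hN : ∀ j ≤ n, N j = X * N (j + 1) + C (γ j) * D (j + 1))
    (hD : ∀ j ≤ n, D j = X * C (starRingEnd ℂ (γ j)) * N (j + 1) + D (j + 1))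
    (d : ℕ → ℕ) (hd : ∀ j, d j = max (N j).natDegree (D j).natDegree)
    (h0 : d 0 ≤ n) :
    d (n + 1) ≤ n ∧ (N (n + 1)).degree < (D (n + 1)).degree := by
  have hd_le : d (n + 1) ≤ d 0 := by
    rw [hd, hd]
    exact backwardSchur_max_natDegree_le hN hD hγ (Nat.zero_le _)
  refine ⟨hd_le.trans h0, not_le.mp fun hDN => ?_⟩
  have hN_ne : N (n + 1) ≠ 0 := by
    rintro hN_zero
    rw [hN_zero, degree_zero, le_bot_iff, degree_eq_bot] at hDN
    exact hD0 (by simp [hDN])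
  have hN₀ : (N 0).natDegree = (N (n + 1)).natDegree + (n + 1) := by
    apply natDegree_eq_of_degree_eq_some
    rw [(backwardSchur_degree_eq_of_degree_le hN hD hDN (Nat.zero_le _)).2,
      degree_eq_natDegree hN_ne]
    norm_cast
  have hN₀_le : (N 0).natDegree ≤ d 0 := hd 0 ▸ le_max_left _ _
  omega

/-- in the backward Schur algorithm
`N_j = z·N_{j+1} + γ_j·D_{j+1}`, `D_j = z·conj(γ_j)·N_{j+1} + D_{j+1}` started from a
coprime pair `(N_{n+1}, D_{n+1})` with `D_{n+1}(0) ≠ 0`, if the final function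
`f = f_0` has McMillan degree `d_0 ≤ n`, then the parameter `E = f_{n+1}` has McMillan
degree `d_{n+1} ≤ n` and vanishes at infinity, i.e. `deg N_{n+1} < deg D_{n+1}`
(strict degrees, `deg 0 = -∞`). -/
theorem stmt_14 (n : ℕ) (γ : ℕ → ℂ) (hγ : ∀ j ≤ n, ‖γ j‖ < 1)
    (N D : ℕ → Polynomial ℂ)
    (hcop : IsCoprime (N (n + 1)) (D (n + 1))) (hD0 : (D (n + 1)).eval 0 ≠ 0)
    (hN : ∀ j ≤ n, N j = X * N (j + 1) + C (γ j) * D (j + 1))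
    (hD : ∀ j ≤ n, D j = X * C (starRingEnd ℂ (γ j)) * N (j + 1) + D (j + 1))
    (d : ℕ → ℕ) (hd : ∀ j, d j = max (N j).natDegree (D j).natDegree)
    (h0 : d 0 ≤ n) :
    d (n + 1) ≤ n ∧ (N (n + 1)).degree < (D (n + 1)).degree :=
  stmt_14_general n γ hγ N D hD0 hN hD d hd h0
end

section
/- If deg D_{n+1} ≤ deg N_{n+1} (strict degree comparison with deg 0 = −∞, i.e. the parameter E = f_{n+1} does not vanish at infinity), then d_0 = d_{n+1} + n + 1; that is, the function f = f_0 obtained from E by n+1 steps of the backward Schur algorithm has McMillan degree exactly deg E + n + 1. -/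
/-!
Each backward step raises `deg N` by exactly one while keeping `deg D ≤ deg N`: the term
`X * N` strictly dominates `C γ * D`, and both summands of the new `D` have degree at most
`deg N + 1`. Hence `N₀` has degree `deg N_{n+1} + n + 1` and dominates `D₀`.
-/

open Polynomial

section SchurStep

variable {R : Type*} [Semiring R] {p q : R[X]}

theorem degree_C_mul_le_degree (a : R) (q : R[X]) : (C a * q).degree ≤ q.degree := by
  simpa [smul_eq_C_mul] using degree_smul_le a q

variable [Nontrivial R]

theorem degree_X_mul_add_C_mul (a : R) (hqp : q.degree ≤ p.degree) (hp : p ≠ 0) :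
    (X * p + C a * q).degree = p.degree + 1 := by
  have hXp : (X * p).degree = p.degree + 1 := by rw [X_mul, degree_mul_X]
  refine (degree_add_eq_left_of_degree_lt ?_).trans hXp
  rw [hXp, degree_eq_natDegree hp]
  exact ((degree_C_mul_le_degree a q).trans (hqp.trans_eq (degree_eq_natDegree hp))).trans_lt
    (by exact_mod_cast Nat.lt_succ_self _)

theorem degree_X_mul_C_mul_add_le (b : R) (hqp : q.degree ≤ p.degree) :
    (X * C b * p + q).degree ≤ p.degree + 1 := by
  refine (degree_add_le _ _).trans (max_le ?_ ?_)
  · rw [mul_assoc, X_mul, degree_mul_X]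
    exact add_le_add_left (degree_C_mul_le_degree b p) 1
  · exact hqp.trans (le_add_of_nonneg_right zero_le_one)

theorem natDegree_backward_schur {N D : ℕ → R[X]} {a b : ℕ → R} {m : ℕ}
    (hN : ∀ j < m, N j = X * N (j + 1) + C (a j) * D (j + 1))
    (hD : ∀ j < m, D j = X * C (b j) * N (j + 1) + D (j + 1))
    (hDN : (D m).degree ≤ (N m).degree) (hNm : N m ≠ 0) {j : ℕ} (hj : j ≤ m) :
    (N j).natDegree = (N m).natDegree + (m - j) ∧ (D j).degree ≤ (N j).degree ∧ N j ≠ 0 := by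
  induction hj using Nat.decreasingInduction with
  | self => simpa using ⟨hDN, hNm⟩
  | of_succ k hk ih =>
    obtain ⟨ihdeg, ihDN, ihN⟩ := ih
    have hNk : (N k).degree = ↑((N (k + 1)).natDegree + 1) := by
      rw [hN k hk, degree_X_mul_add_C_mul _ ihDN ihN, degree_eq_natDegree ihN]; rfl
    refine ⟨?_, ?_, fun h => by rw [h, degree_zero] at hNk; exact WithBot.bot_ne_coe hNk⟩
    · rw [natDegree_eq_of_degree_eq_some hNk, ihdeg]
      omega
    · rw [hNk, hD k hk, Nat.cast_succ, ← degree_eq_natDegree ihN]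
      exact degree_X_mul_C_mul_add_le _ ihDN

end SchurStep

theorem stmt_15_general (n : ℕ) (γ : ℕ → ℂ)
    (N D : ℕ → Polynomial ℂ)
    (hcop : IsCoprime (N (n + 1)) (D (n + 1)))
    (hN : ∀ j ≤ n, N j = X * N (j + 1) + C (γ j) * D (j + 1))
    (hD : ∀ j ≤ n, D j = X * C (starRingEnd ℂ (γ j)) * N (j + 1) + D (j + 1))
    (d : ℕ → ℕ) (hd : ∀ j, d j = max (N j).natDegree (D j).natDegree)
    (hE : (D (n + 1)).degree ≤ (N (n + 1)).degree) :
    d 0 = d (n + 1) + n + 1 := by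
  have hN_ne : N (n + 1) ≠ 0 := by
    intro h
    rw [h, degree_zero, le_bot_iff, degree_eq_bot] at hE
    exact not_isCoprime_zero_zero (h ▸ hE ▸ hcop)
  obtain ⟨hN0, hDN0, -⟩ := natDegree_backward_schur (m := n + 1) (fun j hj => hN j (by omega))
    (fun j hj => hD j (by omega)) hE hN_ne (Nat.zero_le (n + 1))
  rw [hd 0, hd (n + 1), max_eq_left (natDegree_le_natDegree hDN0),
    max_eq_left (natDegree_le_natDegree hE), hN0]
  omega

/-- in the backward Schur algorithm
`N_j = z·N_{j+1} + γ_j·D_{j+1}`, `D_j = z·conj(γ_j)·N_{j+1} + D_{j+1}` started from a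
coprime pair `(N_{n+1}, D_{n+1})` with `D_{n+1}(0) ≠ 0`, if the parameter
`E = f_{n+1}` does not vanish at infinity, i.e. `deg D_{n+1} ≤ deg N_{n+1}` (strict
degrees, `deg 0 = -∞`), then the McMillan degrees `d_j = max(deg N_j, deg D_j)`
satisfy `d_0 = d_{n+1} + n + 1`. -/
theorem stmt_15 (n : ℕ) (γ : ℕ → ℂ) (hγ : ∀ j ≤ n, ‖γ j‖ < 1)
    (N D : ℕ → Polynomial ℂ)
    (hcop : IsCoprime (N (n + 1)) (D (n + 1))) (hD0 : (D (n + 1)).eval 0 ≠ 0)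
    (hN : ∀ j ≤ n, N j = X * N (j + 1) + C (γ j) * D (j + 1))
    (hD : ∀ j ≤ n, D j = X * C (starRingEnd ℂ (γ j)) * N (j + 1) + D (j + 1))
    (d : ℕ → ℕ) (hd : ∀ j, d j = max (N j).natDegree (D j).natDegree)
    (hE : (D (n + 1)).degree ≤ (N (n + 1)).degree) :
    d 0 = d (n + 1) + n + 1 :=
  stmt_15_general n γ N D hcop hN hD d hd hE
end
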